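/- For smooth solutions (B, φ, D, ψ) of the nonlinear Maxwell-GLM system ∂_t B + ∇×E + ∇ξ = 0, ∂_t φ + ∇·H = 0, ∂_t D − ∇×H + ∇η = 0, ∂_t ψ + ∇·E = 0, where (H, ξ, E, η) = ∇𝓔(B, φ, D, ψ), the total energy satisfies ∂_t 𝓔 + ∇·(E × H + η E + ξ H) = 0. -/

import Mathlib

/-!
By the chain rule, `∂ₜ𝓔 = H · ∂ₜB + ξ ∂ₜφ + E · ∂ₜD + η ∂ₜψ`. Substituting the four evolution
equations leaves `-(H · curl E - E · curl H) - (H · ∇ξ + ξ div H) - (E · ∇η + η div E)`,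
which by the product rules `div (E × H) = H · curl E - E · curl H` and
`div (f u) = u · ∇f + f div u` is exactly `-div (E × H + η E + ξ H)`. The product rules need
the dual variables to be `C¹`, which is where `𝓔 ∈ C²` enters.
-/

open scoped RealInnerProductSpace

noncomputable section

abbrev V3 := EuclideanSpace ℝ (Fin 3)

/-- Partial derivative in time. -/
def pt {Y : Type*} [NormedAddCommGroup Y] [NormedSpace ℝ Y]
    (g : ℝ × V3 → Y) (t : ℝ) (x : V3) : Y :=
  deriv (fun τ => g (τ, x)) t

/-- Spatial partial derivative in direction `j`. -/
def pde {Y : Type*} [NormedAddCommGroup Y] [NormedSpace ℝ Y]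
    (j : Fin 3) (g : V3 → Y) (x : V3) : Y :=
  fderiv ℝ g x (EuclideanSpace.single j 1)

/-- The cross product in `ℝ³`. -/
def cross (u v : V3) : V3 :=
  WithLp.toLp 2 ![u 1 * v 2 - u 2 * v 1, u 2 * v 0 - u 0 * v 2, u 0 * v 1 - u 1 * v 0]

/-- The curl of a vector field on `ℝ³`. -/
def curlE (w : V3 → V3) (x : V3) : V3 :=
  WithLp.toLp 2 ![pde 1 (fun y => w y 2) x - pde 2 (fun y => w y 1) x,
    pde 2 (fun y => w y 0) x - pde 0 (fun y => w y 2) x,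
    pde 0 (fun y => w y 1) x - pde 1 (fun y => w y 0) x]

/-- The divergence of a vector field on `ℝ³`. -/
def divE (w : V3 → V3) (x : V3) : ℝ :=
  ∑ j, pde j (fun y => w y j) x

variable (En : V3 × ℝ × V3 × ℝ → ℝ)
  (B D : ℝ × V3 → V3) (φ ψ : ℝ × V3 → ℝ)

/-- Dual variable `H = ∂𝓔/∂B`. -/
def Hd (z : ℝ × V3) : V3 := gradient (fun b => En (b, φ z, D z, ψ z)) (B z)

/-- Dual variable `ξ = ∂𝓔/∂φ`. -/
def ξd (z : ℝ × V3) : ℝ := deriv (fun r => En (B z, r, D z, ψ z)) (φ z)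

/-- Dual variable `E = ∂𝓔/∂D`. -/
def Ed (z : ℝ × V3) : V3 := gradient (fun e => En (B z, φ z, e, ψ z)) (D z)

/-- Dual variable `η = ∂𝓔/∂ψ`. -/
def ηd (z : ℝ × V3) : ℝ := deriv (fun r => En (B z, φ z, D z, r)) (ψ z)

section VectorCalculus

variable {f g : V3 → ℝ} {u v : V3 → V3} {x : V3}

lemma pde_add (j : Fin 3) (hf : DifferentiableAt ℝ f x) (hg : DifferentiableAt ℝ g x) :
    pde j (fun y => f y + g y) x = pde j f x + pde j g x := by
  simp only [pde, fderiv_fun_add hf hg, add_apply]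

lemma pde_sub (j : Fin 3) (hf : DifferentiableAt ℝ f x) (hg : DifferentiableAt ℝ g x) :
    pde j (fun y => f y - g y) x = pde j f x - pde j g x := by
  simp only [pde, fderiv_fun_sub hf hg, sub_apply]

lemma pde_mul (j : Fin 3) (hf : DifferentiableAt ℝ f x) (hg : DifferentiableAt ℝ g x) :
    pde j (fun y => f y * g y) x = pde j f x * g x + f x * pde j g x := by
  simp only [pde, fderiv_fun_mul hf hg, add_apply, smul_apply, smul_eq_mul]
  ring

lemma gradient_apply_eq_pde (f : V3 → ℝ) (x : V3) (j : Fin 3) :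
    gradient f x j = pde j f x := by
  rw [pde, ← inner_gradient_left, EuclideanSpace.inner_single_right, one_mul, conj_trivial]

lemma divE_add (hu : DifferentiableAt ℝ u x) (hv : DifferentiableAt ℝ v x) :
    divE (fun y => u y + v y) x = divE u x + divE v x := by
  simp only [divE, PiLp.add_apply, ← Finset.sum_add_distrib]
  exact Finset.sum_congr rfl fun j _ =>
    pde_add j (differentiableAt_euclidean.mp hu j) (differentiableAt_euclidean.mp hv j)

lemma divE_smul (hf : DifferentiableAt ℝ f x) (hu : DifferentiableAt ℝ u x) :
    divE (fun y => f y • u y) x = ⟪u x, gradient f x⟫ + f x * divE u x := by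
  simp only [divE, PiLp.smul_apply, smul_eq_mul, PiLp.inner_apply, RCLike.inner_apply,
    conj_trivial, gradient_apply_eq_pde, Finset.mul_sum, ← Finset.sum_add_distrib]
  exact Finset.sum_congr rfl fun j _ => pde_mul j hf (differentiableAt_euclidean.mp hu j)

lemma DifferentiableAt.cross (hu : DifferentiableAt ℝ u x) (hv : DifferentiableAt ℝ v x) :
    DifferentiableAt ℝ (fun y => cross (u y) (v y)) x := by
  have du := differentiableAt_euclidean.mp hu
  have dv := differentiableAt_euclidean.mp hv
  refine differentiableAt_euclidean.mpr fun i => ?_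
  fin_cases i
  · exact ((du 1).fun_mul (dv 2)).fun_sub ((du 2).fun_mul (dv 1))
  · exact ((du 2).fun_mul (dv 0)).fun_sub ((du 0).fun_mul (dv 2))
  · exact ((du 0).fun_mul (dv 1)).fun_sub ((du 1).fun_mul (dv 0))

lemma divE_cross (hu : DifferentiableAt ℝ u x) (hv : DifferentiableAt ℝ v x) :
    divE (fun y => cross (u y) (v y)) x = ⟪v x, curlE u x⟫ - ⟪u x, curlE v x⟫ := by
  have du := differentiableAt_euclidean.mp hu
  have dv := differentiableAt_euclidean.mp hv
  simp only [divE, cross, curlE, Fin.sum_univ_three, PiLp.inner_apply, RCLike.inner_apply,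
    conj_trivial, PiLp.toLp_apply, Matrix.cons_val_zero, Matrix.cons_val_one,
    Matrix.cons_val_two, Matrix.head_cons, Matrix.tail_cons]
  rw [pde_sub 0 ((du 1).fun_mul (dv 2)) ((du 2).fun_mul (dv 1)),
    pde_sub 1 ((du 2).fun_mul (dv 0)) ((du 0).fun_mul (dv 2)),
    pde_sub 2 ((du 0).fun_mul (dv 1)) ((du 1).fun_mul (dv 0)),
    pde_mul 0 (du 1) (dv 2), pde_mul 0 (du 2) (dv 1), pde_mul 1 (du 2) (dv 0),
    pde_mul 1 (du 0) (dv 2), pde_mul 2 (du 0) (dv 1), pde_mul 2 (du 1) (dv 0)]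
  ring

end VectorCalculus

section Slices

open ContinuousLinearMap

variable {E₁ E₂ E₃ E₄ : Type*} [NormedAddCommGroup E₁] [NormedSpace ℝ E₁]
  [NormedAddCommGroup E₂] [NormedSpace ℝ E₂] [NormedAddCommGroup E₃] [NormedSpace ℝ E₃]
  [NormedAddCommGroup E₄] [NormedSpace ℝ E₄]
  {f : E₁ × E₂ × E₃ × E₄ → ℝ} {a : E₁} {b : E₂} {c : E₃} {d : E₄}

lemma fderiv_slice₁ (hf : DifferentiableAt ℝ f (a, b, c, d)) :
    fderiv ℝ (fun a' => f (a', b, c, d)) a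
      = (fderiv ℝ f (a, b, c, d)).comp (inl ℝ E₁ (E₂ × E₃ × E₄)) :=
  (hf.hasFDerivAt.comp a (hasFDerivAt_prodMk_left a (b, c, d))).fderiv

lemma fderiv_slice₂ (hf : DifferentiableAt ℝ f (a, b, c, d)) :
    fderiv ℝ (fun b' => f (a, b', c, d)) b
      = (fderiv ℝ f (a, b, c, d)).comp ((inr ℝ E₁ _).comp (inl ℝ E₂ (E₃ × E₄))) :=
  (hf.hasFDerivAt.comp b ((hasFDerivAt_prodMk_right a (b, c, d)).comp b
    (hasFDerivAt_prodMk_left b (c, d)))).fderiv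

lemma fderiv_slice₃ (hf : DifferentiableAt ℝ f (a, b, c, d)) :
    fderiv ℝ (fun c' => f (a, b, c', d)) c
      = (fderiv ℝ f (a, b, c, d)).comp
          ((inr ℝ E₁ _).comp ((inr ℝ E₂ _).comp (inl ℝ E₃ E₄))) :=
  (hf.hasFDerivAt.comp c ((hasFDerivAt_prodMk_right a (b, c, d)).comp c
    ((hasFDerivAt_prodMk_right b (c, d)).comp c (hasFDerivAt_prodMk_left c d)))).fderiv

lemma fderiv_slice₄ (hf : DifferentiableAt ℝ f (a, b, c, d)) :
    fderiv ℝ (fun d' => f (a, b, c, d')) d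
      = (fderiv ℝ f (a, b, c, d)).comp
          ((inr ℝ E₁ _).comp ((inr ℝ E₂ _).comp (inr ℝ E₃ E₄))) :=
  (hf.hasFDerivAt.comp d ((hasFDerivAt_prodMk_right a (b, c, d)).comp d
    ((hasFDerivAt_prodMk_right b (c, d)).comp d (hasFDerivAt_prodMk_right c d)))).fderiv

lemma fderiv_apply_eq_sum_fderiv_slice (hf : DifferentiableAt ℝ f (a, b, c, d))
    (v : E₁ × E₂ × E₃ × E₄) :
    fderiv ℝ f (a, b, c, d) v
      = fderiv ℝ (fun a' => f (a', b, c, d)) a v.1 + fderiv ℝ (fun b' => f (a, b', c, d)) b v.2.1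
        + fderiv ℝ (fun c' => f (a, b, c', d)) c v.2.2.1
        + fderiv ℝ (fun d' => f (a, b, c, d')) d v.2.2.2 := by
  obtain ⟨v₁, v₂, v₃, v₄⟩ := v
  have hv : ((v₁, v₂, v₃, v₄) : E₁ × E₂ × E₃ × E₄)
      = inl ℝ E₁ _ v₁ + inr ℝ E₁ _ (inl ℝ E₂ _ v₂) + inr ℝ E₁ _ (inr ℝ E₂ _ (inl ℝ E₃ E₄ v₃))
        + inr ℝ E₁ _ (inr ℝ E₂ _ (inr ℝ E₃ E₄ v₄)) := by
    simp
  rw [fderiv_slice₁ hf, fderiv_slice₂ hf, fderiv_slice₃ hf, fderiv_slice₄ hf]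
  conv_lhs => rw [hv]
  simp only [map_add, comp_apply]

end Slices

lemma hasDerivAt_pt {Y : Type*} [NormedAddCommGroup Y] [NormedSpace ℝ Y] {g : ℝ × V3 → Y}
    {t : ℝ} {x : V3} (hg : DifferentiableAt ℝ g (t, x)) :
    HasDerivAt (fun τ => g (τ, x)) (pt g t x) t :=
  (hg.comp t ((hasDerivAt_id t).prodMk (hasDerivAt_const t x)).differentiableAt).hasDerivAt

lemma Differentiable.differentiableAt_comp_prodMk {Y : Type*} [NormedAddCommGroup Y]
    [NormedSpace ℝ Y] {g : ℝ × V3 → Y} (hg : Differentiable ℝ g) (t : ℝ) (x : V3) :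
    DifferentiableAt ℝ (fun y => g (t, y)) x :=
  (hg (t, x)).comp x ((differentiableAt_const t).prodMk differentiableAt_id)

section DualVariables

open ContinuousLinearMap

variable {En : V3 × ℝ × V3 × ℝ → ℝ} {B D : ℝ × V3 → V3} {φ ψ : ℝ × V3 → ℝ}

lemma fderiv_energy_apply {z : ℝ × V3} (hEn : DifferentiableAt ℝ En (B z, φ z, D z, ψ z))
    (v : V3 × ℝ × V3 × ℝ) :
    fderiv ℝ En (B z, φ z, D z, ψ z) v
      = ⟪Hd En B D φ ψ z, v.1⟫ + ξd En B D φ ψ z * v.2.1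
        + ⟪Ed En B D φ ψ z, v.2.2.1⟫ + ηd En B D φ ψ z * v.2.2.2 := by
  rw [fderiv_apply_eq_sum_fderiv_slice hEn, Hd, ξd, Ed, ηd, inner_gradient_left,
    inner_gradient_left, fderiv_eq_deriv_mul, fderiv_eq_deriv_mul]

lemma pt_energy {t : ℝ} {x : V3}
    (hEn : DifferentiableAt ℝ En (B (t, x), φ (t, x), D (t, x), ψ (t, x)))
    (hB : DifferentiableAt ℝ B (t, x)) (hφ : DifferentiableAt ℝ φ (t, x))
    (hD : DifferentiableAt ℝ D (t, x)) (hψ : DifferentiableAt ℝ ψ (t, x)) :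
    pt (fun z => En (B z, φ z, D z, ψ z)) t x
      = ⟪Hd En B D φ ψ (t, x), pt B t x⟫ + ξd En B D φ ψ (t, x) * pt φ t x
        + ⟪Ed En B D φ ψ (t, x), pt D t x⟫ + ηd En B D φ ψ (t, x) * pt ψ t x := by
  have hU := (hasDerivAt_pt hB).prodMk ((hasDerivAt_pt hφ).prodMk
    ((hasDerivAt_pt hD).prodMk (hasDerivAt_pt hψ)))
  exact (hEn.hasFDerivAt.comp_hasDerivAt t hU).deriv.trans (fderiv_energy_apply hEn _)

variable {n m : WithTop ℕ∞} (hEn : ContDiff ℝ m En) (hnm : n + 1 ≤ m)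
  (hB : ContDiff ℝ n B) (hφ : ContDiff ℝ n φ) (hD : ContDiff ℝ n D) (hψ : ContDiff ℝ n ψ)
include hEn hnm hB hφ hD hψ

lemma contDiff_fderiv_energy : ContDiff ℝ n (fun z => fderiv ℝ En (B z, φ z, D z, ψ z)) :=
  (hEn.fderiv_right hnm).comp (hB.prodMk (hφ.prodMk (hD.prodMk hψ)))

lemma contDiff_Hd : ContDiff ℝ n (Hd En B D φ ψ) := by
  have hEn' := (hEn.of_le (le_add_self.trans hnm)).differentiable one_ne_zero
  have h : Hd En B D φ ψ = fun z => (InnerProductSpace.toDual ℝ V3).symm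
      ((fderiv ℝ En (B z, φ z, D z, ψ z)).comp (inl ℝ V3 (ℝ × V3 × ℝ))) :=
    funext fun z => by rw [Hd, gradient, fderiv_slice₁ (hEn' _)]
  rw [h]
  exact (InnerProductSpace.toDual ℝ V3).symm.contDiff.comp
    ((contDiff_fderiv_energy hEn hnm hB hφ hD hψ).clm_comp contDiff_const)

lemma contDiff_Ed : ContDiff ℝ n (Ed En B D φ ψ) := by
  have hEn' := (hEn.of_le (le_add_self.trans hnm)).differentiable one_ne_zero
  have h : Ed En B D φ ψ = fun z => (InnerProductSpace.toDual ℝ V3).symm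
      ((fderiv ℝ En (B z, φ z, D z, ψ z)).comp
        ((inr ℝ V3 _).comp ((inr ℝ ℝ _).comp (inl ℝ V3 ℝ)))) :=
    funext fun z => by rw [Ed, gradient, fderiv_slice₃ (hEn' _)]
  rw [h]
  exact (InnerProductSpace.toDual ℝ V3).symm.contDiff.comp
    ((contDiff_fderiv_energy hEn hnm hB hφ hD hψ).clm_comp contDiff_const)

lemma contDiff_ξd : ContDiff ℝ n (ξd En B D φ ψ) := by
  have hEn' := (hEn.of_le (le_add_self.trans hnm)).differentiable one_ne_zero
  have h : ξd En B D φ ψ = fun z => fderiv ℝ En (B z, φ z, D z, ψ z) (0, 1, 0, 0) :=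
    funext fun z => by rw [ξd, ← fderiv_apply_one_eq_deriv, fderiv_slice₂ (hEn' _)]; rfl
  rw [h]
  exact (contDiff_fderiv_energy hEn hnm hB hφ hD hψ).clm_apply contDiff_const

lemma contDiff_ηd : ContDiff ℝ n (ηd En B D φ ψ) := by
  have hEn' := (hEn.of_le (le_add_self.trans hnm)).differentiable one_ne_zero
  have h : ηd En B D φ ψ = fun z => fderiv ℝ En (B z, φ z, D z, ψ z) (0, 0, 0, 1) :=
    funext fun z => by rw [ηd, ← fderiv_apply_one_eq_deriv, fderiv_slice₄ (hEn' _)]; rfl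
  rw [h]
  exact (contDiff_fderiv_energy hEn hnm hB hφ hD hψ).clm_apply contDiff_const

end DualVariables

/-- Total energy conservation for smooth solutions of the nonlinear Maxwell-GLM system:
`∂ₜ 𝓔 + ∇·(E × H + η E + ξ H) = 0`. -/
theorem maxwell_glm_energy_conservation
    (hB : ContDiff ℝ 1 B) (hD : ContDiff ℝ 1 D)
    (hφ : ContDiff ℝ 1 φ) (hψ : ContDiff ℝ 1 ψ) (hEn : ContDiff ℝ 2 En)
    (hpde_B : ∀ t x, pt B t x + curlE (fun y => Ed En B D φ ψ (t, y)) x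
      + gradient (fun y => ξd En B D φ ψ (t, y)) x = 0)
    (hpde_φ : ∀ t x, pt φ t x + divE (fun y => Hd En B D φ ψ (t, y)) x = 0)
    (hpde_D : ∀ t x, pt D t x - curlE (fun y => Hd En B D φ ψ (t, y)) x
      + gradient (fun y => ηd En B D φ ψ (t, y)) x = 0)
    (hpde_ψ : ∀ t x, pt ψ t x + divE (fun y => Ed En B D φ ψ (t, y)) x = 0) :
    ∀ t x, pt (fun z => En (B z, φ z, D z, ψ z)) t x
      + divE (fun y => cross (Ed En B D φ ψ (t, y)) (Hd En B D φ ψ (t, y))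
          + ηd En B D φ ψ (t, y) • Ed En B D φ ψ (t, y)
          + ξd En B D φ ψ (t, y) • Hd En B D φ ψ (t, y)) x = 0 := by
  intro t x
  have hE := (contDiff_Ed hEn (by norm_num) hB hφ hD hψ).differentiable one_ne_zero
  have hH := (contDiff_Hd hEn (by norm_num) hB hφ hD hψ).differentiable one_ne_zero
  have hξ := (contDiff_ξd hEn (by norm_num) hB hφ hD hψ).differentiable one_ne_zero
  have hη := (contDiff_ηd hEn (by norm_num) hB hφ hD hψ).differentiable one_ne_zero
  have hEx := hE.differentiableAt_comp_prodMk t x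
  have hHx := hH.differentiableAt_comp_prodMk t x
  have hξx := hξ.differentiableAt_comp_prodMk t x
  have hηx := hη.differentiableAt_comp_prodMk t x
  rw [pt_energy ((hEn.differentiable (by norm_num)) _) ((hB.differentiable one_ne_zero) _)
      ((hφ.differentiable one_ne_zero) _) ((hD.differentiable one_ne_zero) _)
      ((hψ.differentiable one_ne_zero) _),
    divE_add ((hEx.cross hHx).fun_add (hηx.fun_smul hEx)) (hξx.fun_smul hHx),
    divE_add (hEx.cross hHx) (hηx.fun_smul hEx), divE_cross hEx hHx, divE_smul hηx hEx,
    divE_smul hξx hHx]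
  have hB_H := congrArg (⟪Hd En B D φ ψ (t, x), ·⟫) (hpde_B t x)
  have hD_E := congrArg (⟪Ed En B D φ ψ (t, x), ·⟫) (hpde_D t x)
  simp only [inner_add_right, inner_sub_right, inner_zero_right] at hB_H hD_E
  linear_combination hB_H + hD_E + ξd En B D φ ψ (t, x) * hpde_φ t x
    + ηd En B D φ ψ (t, x) * hpde_ψ t x

end
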